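/- For the nine stencil polynomials C_{r,ℓ}(h) of the 2D compact scheme, the sum Σ_{r,ℓ=−1}^{1} C_{r,ℓ}(h) is a polynomial in h of the form Σ_{q=0}^{4} ϖ_q h^q with ϖ₀ = ϖ₁ = 0 and ϖ₂ = d. In particular, if d = 0, then after also noting ϖ₃ = 0 and ϖ₄ = 0 in that case, the nine polynomials sum to the zero polynomial. -/
import Mathlib

/-- The values at a fixed point of the coefficient functions `a, b, d` of the 2D
convection–diffusion–reaction equation, together with their first partial derivatives and
the Laplacian-type second derivative data appearing in the compact 9-point stencil. -/
structure P2 where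
  a : ℝ
  b : ℝ
  d : ℝ
  ax : ℝ
  ay : ℝ
  bx : ℝ
  by' : ℝ
  dx : ℝ
  dy : ℝ
  Da : ℝ
  Db : ℝ
  Dd : ℝ

/-- `C₋₁,₋₁`. -/
noncomputable def Cm1m1 (P : P2) (h : ℝ) : ℝ := 1/6 - (P.a + P.b)/12 * h

/-- `C₋₁,₀`. -/
noncomputable def Cm10 (P : P2) (h : ℝ) : ℝ :=
  2/3 - P.a/3 * h + (1/12) * (P.a^2 + P.a*P.b + P.d + 2*P.ax + P.ay + P.bx) * h^2
    - (1/24) * (P.a*(P.ax + P.d) + P.b*P.ay + 2*P.dx + P.Da) * h^3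

/-- `C₋₁,₁`. -/
noncomputable def Cm11 (P : P2) (h : ℝ) : ℝ :=
  1/6 - (1/12) * (P.a - P.b) * h - (1/12) * (P.a*P.b + P.ay + P.bx) * h^2

/-- `C₀,₋₁`. -/
noncomputable def C0m1 (P : P2) (h : ℝ) : ℝ :=
  2/3 - P.b/3 * h + (1/12) * (P.b^2 + P.a*P.b + P.ay + P.bx + 2*P.by' + P.d) * h^2
    - (1/24) * (P.a*P.bx + P.b*(P.by' + P.d) + 2*P.dy + P.Db) * h^3
    + (P.b*P.dy/12) * h^4

/-- `C₀,₀`. -/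
noncomputable def C00 (P : P2) (h : ℝ) : ℝ :=
  -10/3 - (1/6) * (P.a^2 + P.a*P.b + P.b^2 - 4*P.d + 2*P.ax + P.ay + P.bx + 2*P.by') * h^2
    + (1/12) * (P.a*P.dx + P.Dd) * h^4

/-- `C₀,₁`. -/
noncomputable def C01 (P : P2) (h : ℝ) : ℝ :=
  2/3 + P.b/3 * h + (1/12) * (P.a*P.b + P.b^2 + P.d + P.ay + P.bx + 2*P.by') * h^2
    + (1/24) * (P.a*P.bx + P.b*(P.by' + P.d) + 2*P.dy + P.Db) * h^3

/-- `C₁,₋₁`. -/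
noncomputable def C1m1 (P : P2) (h : ℝ) : ℝ :=
  1/6 + (1/12) * (P.a - P.b) * h - (1/12) * (P.a*P.b + P.ay + P.bx) * h^2
    - (P.b*P.dy/12) * h^4

/-- `C₁,₀`. -/
noncomputable def C10 (P : P2) (h : ℝ) : ℝ :=
  2/3 + P.a/3 * h + (1/12) * (P.a^2 + P.a*P.b + P.d + 2*P.ax + P.ay + P.bx) * h^2
    + (1/24) * (P.a*(P.ax + P.d) + P.b*P.ay + 2*P.dx + P.Da) * h^3
    + (P.b*P.dy/12) * h^4

/-- `C₁,₁`. -/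
noncomputable def C11 (P : P2) (h : ℝ) : ℝ := 1/6 + (1/12) * (P.a + P.b) * h

/-- Sum of the nine stencil polynomials. -/
noncomputable def S2 (P : P2) (h : ℝ) : ℝ :=
  Cm1m1 P h + Cm10 P h + Cm11 P h + C0m1 P h + C00 P h + C01 P h
    + C1m1 P h + C10 P h + C11 P h

/-- The sum of the nine 2D stencil polynomials is of the form
`d·h² + ϖ₃·h³ + ϖ₄·h⁴` (so `ϖ₀ = ϖ₁ = 0` and `ϖ₂ = d`); and if `d = 0` together with
`dₓ = d_y = Δd = 0`, the nine polynomials sum to the zero polynomial. -/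
theorem stmt5 (P : P2) :
    (∃ w3 w4 : ℝ, ∀ h : ℝ, S2 P h = P.d * h^2 + w3 * h^3 + w4 * h^4) ∧
    (P.d = 0 → P.dx = 0 → P.dy = 0 → P.Dd = 0 → ∀ h : ℝ, S2 P h = 0) := by
  constructor
  · exact ⟨0, (P.a*P.dx + P.b*P.dy + P.Dd)/12, fun h => by
      simp only [S2, Cm1m1, Cm10, Cm11, C0m1, C00, C01, C1m1, C10, C11]; ring⟩
  · intro h1 h2 h3 h4 h
    simp only [S2, Cm1m1, Cm10, Cm11, C0m1, C00, C01, C1m1, C10, C11, h1, h2, h3, h4]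
    ring
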